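/- Let 3_¬ be the three-element dual Stone algebra (chain 0 < a < 1 with ¬1 = 0, ¬a = ¬0 = 1). If for all valuations v into 3_¬ (homomorphisms for ∧, ∨, ¬, ⊥, ⊤), v(β) = 0 implies v(α) = 0, then for all such valuations v, v(α) = 1 implies v(β) = 1. -/
import Mathlib


/-- Propositional formulas built from variables using `∧`, `∨`, `¬`, `⊥`, `⊤`. -/
inductive Fml where
  | var : ℕ → Fml
  | and : Fml → Fml → Fml
  | or : Fml → Fml → Fml
  | dnot : Fml → Fml
  | bot : Fml
  | top : Fml

/-- The dual pseudocomplement on the three-element chain `Fin 3` (`0 < 1 < 2`):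
`¬2 = 0`, `¬0 = ¬1 = 2`. -/
def dneg3 (x : Fin 3) : Fin 3 := if x = 2 then 0 else 2

/-- A valuation in the three-element dual Stone algebra `3_¬ = Fin 3`. -/
def IsVal3D (v : Fml → Fin 3) : Prop :=
  (∀ α β : Fml, v (.and α β) = v α ⊓ v β) ∧
  (∀ α β : Fml, v (.or α β) = v α ⊔ v β) ∧
  (∀ α : Fml, v (.dnot α) = dneg3 (v α)) ∧
  v .bot = 0 ∧ v .top = 2

lemma dd_inf : ∀ x y : Fin 3, dneg3 (dneg3 (x ⊓ y)) = dneg3 (dneg3 x) ⊓ dneg3 (dneg3 y) := by decide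
lemma dd_sup : ∀ x y : Fin 3, dneg3 (dneg3 (x ⊔ y)) = dneg3 (dneg3 x) ⊔ dneg3 (dneg3 y) := by decide
lemma dd_eq2 : ∀ x : Fin 3, dneg3 (dneg3 x) ≠ 0 → x = 2 := by decide

/-- In the three-element dual Stone algebra, falsity preservation implies truth
preservation. -/
theorem dual_stone_falsity_implies_truth_preservation :
    ∀ α β : Fml, (∀ v : Fml → Fin 3, IsVal3D v → v β = 0 → v α = 0) →
      ∀ v : Fml → Fin 3, IsVal3D v → v α = 2 → v β = 2 := by
  intro α β h v hv hα
  obtain ⟨h1, h2, h3, h4, h5⟩ := hv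
  have hwv : IsVal3D (fun γ => dneg3 (dneg3 (v γ))) :=
    ⟨fun a b => by simp [h1, dd_inf], fun a b => by simp [h2, dd_sup],
     fun a => by simp [h3], by simp [h4]; decide, by simp [h5]; decide⟩
  apply dd_eq2
  intro h0
  have := h _ hwv h0
  simp only [hα] at this
  exact absurd this (by decide)
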